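/- For all integers m ≤ n and every y = (y_m,…,y_n) ∈ {−1,1}^{n−m+1}, the hidden-Markov cylinder probability equals a normalized random-field Ising partition function: Σ_{x ∈ {−1,1}^{n−m+1}} (1/2)·∏_{i=m}^{n−1} p_{x_i,x_{i+1}} · ε^{#{i ∈ [m,n] : x_i·y_i = −1}} · (1−ε)^{#{i ∈ [m,n] : x_i·y_i = 1}} = (cosh(J)/λ^{n−m+1}) · Z_{m,n}(y), where p_{x,x'} = 1−p if x = x' and p_{x,x'} = p if x ≠ x'. -/
import Mathlib

open Finset

lemma aux_pq (q L : ℝ) (h0 : 0 < q) (h1 : q < 1) (hL : L = (1/2) * Real.log ((1-q)/q)) :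
    1 - q = Real.exp L / (2 * Real.cosh L) ∧ q = Real.exp (-L) / (2 * Real.cosh L) := by
  have hq : (0:ℝ) < (1-q)/q := div_pos (by linarith) h0
  have ha : 0 < Real.exp L := Real.exp_pos L
  have hsq : Real.exp L * Real.exp L * q = 1 - q := by
    have : Real.exp L * Real.exp L = (1-q)/q := by
      rw [← Real.exp_add, hL, show (1/2) * Real.log ((1-q)/q) + (1/2) * Real.log ((1-q)/q)
        = Real.log ((1-q)/q) by ring, Real.exp_log hq]
    rw [this]; field_simp
  have hcosh : 2 * Real.cosh L = Real.exp L + (Real.exp L)⁻¹ := by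
    rw [Real.cosh_eq, Real.exp_neg]; ring
  constructor
  · rw [hcosh]; rw [eq_div_iff (by positivity)]; field_simp; nlinarith [hsq, ha]
  · rw [hcosh, Real.exp_neg]; rw [eq_div_iff (by positivity)]; field_simp; nlinarith [hsq, ha]

lemma coef_eq (A B cJ cK : ℝ) (hJ : cJ ≠ 0) (hK : cK ≠ 0) (N : ℕ) :
    (1/2 * (A / (2*cJ)^N)) * (B / (2*cK)^(N+1)) = cJ/((4*cJ*cK)^(N+1)) * (A*B) := by
  have h4 : (4:ℝ)^(N+1) = (2:ℝ)^(N+1) * 2^(N+1) := by rw [← mul_pow]; norm_num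
  rw [mul_pow, mul_pow, show ((4:ℝ)*cJ*cK)^(N+1) = 4^(N+1) * cJ^(N+1) * cK^(N+1) by
    rw [mul_pow, mul_pow], h4]
  have h2 : (2:ℝ)^(N+1) = 2 * 2^N := by ring
  rw [h2]
  field_simp
  ring

/-- For all integers `m ≤ n` (encoded as `n = m + N`, `N : ℕ`) and every
`y = (y_m,…,y_n) ∈ {−1,1}^{n−m+1}`, the hidden-Markov cylinder probability equals a
normalized random-field Ising partition function:
`Σ_x (1/2)·∏ p_{x_i,x_{i+1}} · ε^{#{i : x_i y_i = −1}} · (1−ε)^{#{i : x_i y_i = 1}}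
  = (cosh(J)/λ^{n−m+1}) · Z_{m,n}(y)`,
where `p_{x,x'} = 1−p` if `x = x'`, `p` otherwise, `J = (1/2)log((1−p)/p)`,
`K = (1/2)log((1−ε)/ε)`, `λ = 4 cosh(J) cosh(K)`, and
`Z_{m,n}(y) = Σ_x exp(J·Σ_{i=m}^{n−1} x_i x_{i+1} + K·Σ_{i=m}^{n} x_i y_i)`.
Spin configurations `x ∈ {−1,1}^{n−m+1}` are encoded by `x : Fin (N+1) → Bool`
via `spin`. -/
theorem stmt_1 (p ε : ℝ) (hp0 : 0 < p) (hp1 : p < 1) (hε0 : 0 < ε) (hε1 : ε < 1)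
    (J K lam : ℝ)
    (hJ : J = (1 / 2) * Real.log ((1 - p) / p))
    (hK : K = (1 / 2) * Real.log ((1 - ε) / ε))
    (hlam : lam = 4 * Real.cosh J * Real.cosh K)
    (spin : Bool → ℝ) (hspin : ∀ b, spin b = if b then 1 else -1)
    (m n : ℤ) (N : ℕ) (hmn : n = m + N)
    (y : ℤ → ℝ) (hy : ∀ i ∈ Finset.Icc m n, y i = 1 ∨ y i = -1) :
    (∑ x : Fin (N + 1) → Bool,
        (1 / 2 : ℝ) *
          (∏ i : Fin N, (if x i.castSucc = x i.succ then 1 - p else p)) *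
          ε ^ (Finset.univ.filter
                (fun i : Fin (N + 1) => spin (x i) * y (m + (i : ℕ)) = -1)).card *
          (1 - ε) ^ (Finset.univ.filter
                (fun i : Fin (N + 1) => spin (x i) * y (m + (i : ℕ)) = 1)).card)
      = (Real.cosh J / lam ^ (N + 1)) *
        ∑ x : Fin (N + 1) → Bool,
          Real.exp (J * ∑ i : Fin N, spin (x i.castSucc) * spin (x i.succ)
            + K * ∑ i : Fin (N + 1), spin (x i) * y (m + (i : ℕ))) := by
  obtain ⟨hp_eq, hp_eq'⟩ := aux_pq p J hp0 hp1 hJ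
  obtain ⟨hε_eq, hε_eq'⟩ := aux_pq ε K hε0 hε1 hK
  have hcJ : (0:ℝ) < Real.cosh J := Real.cosh_pos J
  have hcK : (0:ℝ) < Real.cosh K := Real.cosh_pos K
  have hy' : ∀ i : Fin (N+1), y (m + (i:ℕ)) = 1 ∨ y (m + (i:ℕ)) = -1 := by
    intro i
    apply hy
    rw [Finset.mem_Icc, hmn]
    have : (i:ℕ) ≤ N := Nat.lt_succ_iff.mp i.isLt
    omega
  rw [Finset.mul_sum]
  apply Finset.sum_congr rfl
  intro x _
  have hspin1 : ∀ b, spin b = 1 ∨ spin b = -1 := by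
    intro b; cases b <;> simp [hspin]
  -- edge factor
  have hedge : ∀ i : Fin N, (if x i.castSucc = x i.succ then 1 - p else p)
      = Real.exp (J * (spin (x i.castSucc) * spin (x i.succ))) / (2 * Real.cosh J) := by
    intro i
    by_cases h : x i.castSucc = x i.succ
    · rw [if_pos h, h]
      have hss : spin (x i.succ) * spin (x i.succ) = 1 := by
        cases x i.succ <;> simp [hspin]
      rw [hss, mul_one]; exact hp_eq
    · rw [if_neg h]
      have hss : spin (x i.castSucc) * spin (x i.succ) = -1 := by
        revert h; cases x i.castSucc <;> cases x i.succ <;> simp [hspin]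
      rw [hss, show J * (-1) = -J by ring]; exact hp_eq'
  -- field factor
  have hfield : ∀ i : Fin (N+1),
      (if spin (x i) * y (m + (i:ℕ)) = -1 then ε else (1 - ε))
      = Real.exp (K * (spin (x i) * y (m + (i:ℕ)))) / (2 * Real.cosh K) := by
    intro i
    rcases hspin1 (x i) with hs | hs <;> rcases hy' i with hyv | hyv <;>
      rw [hs, hyv] <;> norm_num <;> first | exact hε_eq | exact hε_eq'
  -- filter complement
  have hfilter : (Finset.univ.filter
        (fun i : Fin (N + 1) => spin (x i) * y (m + (i : ℕ)) = 1))
      = Finset.univ.filter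
        (fun i : Fin (N + 1) => ¬ spin (x i) * y (m + (i : ℕ)) = -1) := by
    apply Finset.filter_congr
    intro i _
    rcases hspin1 (x i) with hs | hs <;> rcases hy' i with hyv | hyv <;>
      rw [hs, hyv] <;> norm_num
  have hpow : ε ^ (Finset.univ.filter
        (fun i : Fin (N + 1) => spin (x i) * y (m + (i : ℕ)) = -1)).card *
      (1 - ε) ^ (Finset.univ.filter
        (fun i : Fin (N + 1) => spin (x i) * y (m + (i : ℕ)) = 1)).card
      = ∏ i : Fin (N+1), (if spin (x i) * y (m + (i:ℕ)) = -1 then ε else (1 - ε)) := by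
    rw [Finset.prod_ite, Finset.prod_const, Finset.prod_const, ← hfilter]
  rw [mul_assoc, mul_assoc, hpow]
  rw [Finset.prod_congr rfl (fun i _ => hedge i), Finset.prod_congr rfl (fun i _ => hfield i)]
  rw [Finset.prod_div_distrib, Finset.prod_div_distrib, Finset.prod_const, Finset.prod_const,
    ← Real.exp_sum, ← Real.exp_sum, ← Finset.mul_sum, ← Finset.mul_sum,
    Finset.card_univ, Finset.card_univ, Fintype.card_fin, Fintype.card_fin]
  rw [Real.exp_add, hlam, ← mul_assoc]
  exact coef_eq _ _ _ _ (ne_of_gt hcJ) (ne_of_gt hcK) N
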